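/- Let q, t, r, s, x, y_1, …, y_n be nonzero complex numbers with |q| < 1, s = t·r, and r·s = q. Define F(x) = ∏_{k=1}^{n} (s x y_k; q)_∞ (s x y_k^{-1}; q)_∞ / ((r x y_k; q)_∞ (r x y_k^{-1}; q)_∞), assuming no factor in a denominator vanishes. Then t^n · F(qx) · ∏_{k=1}^{n} e(s x; y_k) = F(x) · ∏_{k=1}^{n} e(r x; y_k), where e(z;w) = z + z^{-1} − w − w^{-1} and (a;q)_∞ = ∏_{i=0}^{∞}(1 − a q^i). -/

import Mathlib

/-!
Since `(a;q)_∞ = (1 - a) (aq;q)_∞`, each factor of `F` satisfies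
`F_k(x) = (1 - s x y_k)(1 - s x y_k⁻¹) / ((1 - r x y_k)(1 - r x y_k⁻¹)) · F_k(qx)`.
Writing `e(c; w) = (1 - c w)(1 - c w⁻¹) / c`, the numerators cancel against `e(sx; y_k)` and the
denominators against `e(rx; y_k)`, leaving `t / (s x) = 1 / (r x)`, i.e. `s = t r`.
-/

/-- The BC-type building block `e(z;w) = z + z⁻¹ - w - w⁻¹`. -/
noncomputable def eBC (z w : ℂ) : ℂ := z + z⁻¹ - w - w⁻¹

/-- The infinite `q`-Pochhammer product `(a;q)_∞ = ∏_{i=0}^{∞} (1 - a q^i)`. -/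
noncomputable def qpochInf (a q : ℂ) : ℂ := ∏' i : ℕ, (1 - a * q ^ i)

theorem multipliable_one_sub_mul_pow {R : Type*} [NormedCommRing R] [NormOneClass R]
    [CompleteSpace R] (a q : R) (hq : ‖q‖ < 1) :
    Multipliable fun i : ℕ => 1 - a * q ^ i := by
  simp_rw [sub_eq_add_neg]
  refine multipliable_one_add_of_summable <|
    ((summable_geometric_of_lt_one (norm_nonneg q) hq).mul_left ‖a‖).of_nonneg_of_le
      (fun _ => norm_nonneg _) fun i => ?_
  rw [norm_neg]
  exact (norm_mul_le _ _).trans (mul_le_mul_of_nonneg_left (norm_pow_le _ _) (norm_nonneg a))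

theorem qpochInf_eq_one_sub_mul (a q : ℂ) (hq : ‖q‖ < 1) :
    qpochInf a q = (1 - a) * qpochInf (a * q) q := by
  have htail : Multipliable fun i : ℕ => 1 - a * q ^ (i + 1) :=
    (multipliable_one_sub_mul_pow (a * q) q hq).congr fun i => by ring
  rw [qpochInf, tprod_eq_zero_mul' (f := fun i : ℕ => 1 - a * q ^ i) htail, pow_zero, mul_one,
    qpochInf]
  simp_rw [pow_succ', ← mul_assoc]

theorem eBC_eq_mul_div (c w : ℂ) (hc : c ≠ 0) (hw : w ≠ 0) :
    eBC c w = (1 - c * w) * (1 - c * w⁻¹) / c := by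
  unfold eBC
  field_simp
  ring

/-- `F(x) = ∏_k cauchyKernelFactor q r s (y k) x`. -/
noncomputable def cauchyKernelFactor (q r s w x : ℂ) : ℂ :=
  qpochInf (s * x * w) q * qpochInf (s * x * w⁻¹) q /
    (qpochInf (r * x * w) q * qpochInf (r * x * w⁻¹) q)

theorem cauchyKernelFactor_eq_mul (q r s w x : ℂ) (hq : ‖q‖ < 1) :
    cauchyKernelFactor q r s w x =
      (1 - s * x * w) * (1 - s * x * w⁻¹) / ((1 - r * x * w) * (1 - r * x * w⁻¹)) *
        cauchyKernelFactor q r s w (q * x) := by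
  rw [cauchyKernelFactor, qpochInf_eq_one_sub_mul (s * x * w) q hq,
    qpochInf_eq_one_sub_mul (s * x * w⁻¹) q hq, qpochInf_eq_one_sub_mul (r * x * w) q hq,
    qpochInf_eq_one_sub_mul (r * x * w⁻¹) q hq, mul_mul_mul_comm, mul_mul_mul_comm (1 - r * x * w),
    mul_div_mul_comm, cauchyKernelFactor]
  ring_nf

theorem cauchyKernelFactor_qdifference (q t r s w x : ℂ) (hq : ‖q‖ < 1) (ht : t ≠ 0)
    (hr : r ≠ 0) (hw : w ≠ 0) (hx : x ≠ 0) (hst : s = t * r) (hrw : 1 - r * x * w ≠ 0)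
    (hrw' : 1 - r * x * w⁻¹ ≠ 0) :
    t * cauchyKernelFactor q r s w (q * x) * eBC (s * x) w =
      cauchyKernelFactor q r s w x * eBC (r * x) w := by
  subst hst
  rw [cauchyKernelFactor_eq_mul q r _ w x hq, eBC_eq_mul_div _ w (by simp [*]) hw,
    eBC_eq_mul_div _ w (mul_ne_zero hr hx) hw]
  have hden : (1 - r * x * w) * (1 - r * x * w⁻¹) ≠ 0 := mul_ne_zero hrw hrw'
  generalize (1 - r * x * w) * (1 - r * x * w⁻¹) = D at hden ⊢
  field_simp

theorem kernel_qdifference_equation_general (n : ℕ) (q t r s x : ℂ) (y : Fin n → ℂ)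
    (ht : t ≠ 0) (hr : r ≠ 0) (hx : x ≠ 0)
    (hy : ∀ k, y k ≠ 0) (hqlt : ‖q‖ < 1)
    (hst : s = t * r)
    (hden : ∀ (k : Fin n) (i : ℕ),
      1 - r * x * y k * q ^ i ≠ 0 ∧ 1 - r * x * (y k)⁻¹ * q ^ i ≠ 0) :
    (fun F : ℂ → ℂ =>
        t ^ n * F (q * x) * ∏ k : Fin n, eBC (s * x) (y k) =
          F x * ∏ k : Fin n, eBC (r * x) (y k))
      (fun x => ∏ k : Fin n,
        (qpochInf (s * x * y k) q * qpochInf (s * x * (y k)⁻¹) q) /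
          (qpochInf (r * x * y k) q * qpochInf (r * x * (y k)⁻¹) q)) := by
  dsimp only
  rw [← Fin.prod_const, ← Finset.prod_mul_distrib, ← Finset.prod_mul_distrib,
    ← Finset.prod_mul_distrib]
  refine Finset.prod_congr rfl fun k _ => ?_
  obtain ⟨hrw, hrw'⟩ := hden k 0
  rw [pow_zero, mul_one] at hrw hrw'
  exact cauchyKernelFactor_qdifference q t r s (y k) x hqlt ht hr (hy k) hx hst hrw hrw'

/-- The `q`-difference equation characterizing the Cauchy-type kernel function
in a single `x`-variable: with `s = t r` and `r s = q`,
`t^n · F(qx) · ∏_k e(sx; y_k) = F(x) · ∏_k e(rx; y_k)`. -/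
theorem kernel_qdifference_equation (n : ℕ) (q t r s x : ℂ) (y : Fin n → ℂ)
    (hq0 : q ≠ 0) (ht : t ≠ 0) (hr : r ≠ 0) (hs : s ≠ 0) (hx : x ≠ 0)
    (hy : ∀ k, y k ≠ 0) (hqlt : ‖q‖ < 1)
    (hst : s = t * r) (hrs : r * s = q)
    (hden : ∀ (k : Fin n) (i : ℕ),
      1 - r * x * y k * q ^ i ≠ 0 ∧ 1 - r * x * (y k)⁻¹ * q ^ i ≠ 0) :
    (fun F : ℂ → ℂ =>
        t ^ n * F (q * x) * ∏ k : Fin n, eBC (s * x) (y k) =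
          F x * ∏ k : Fin n, eBC (r * x) (y k))
      (fun x => ∏ k : Fin n,
        (qpochInf (s * x * y k) q * qpochInf (s * x * (y k)⁻¹) q) /
          (qpochInf (r * x * y k) q * qpochInf (r * x * (y k)⁻¹) q)) :=
  kernel_qdifference_equation_general n q t r s x y ht hr hx hy hqlt hst hden
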